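/- arXiv:1003.4092 — 4 statements merged into one kernel-verified Lean document; each statement's English description precedes it below -/
import Mathlib

section
/- (Doubling property on admissible balls.) Let a, τ > 0. There exists a constant d = d_{a,τ,n}, depending only on a, τ, and the dimension n, such that whenever B₁ = B(c₁,r₁) ∈ 𝓑_a and B₂ = B(c₂,r₂) is any ball with B₁ ∩ B₂ ≠ ∅ and r₂ ≤ τ r₁, one has γ(B₂) ≤ d γ(B₁). -/
open MeasureTheory Metric Set
open scoped ENNReal NNReal BigOperators

noncomputable section

/-- The gaussian measure `dγ(x) = (2π)^{-n/2} exp(-|x|²/2) dx` on `ℝⁿ`. -/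
def gaussMeasure (n : ℕ) : Measure (EuclideanSpace ℝ (Fin n)) :=
  volume.withDensity fun x =>
    ENNReal.ofReal ((2 * Real.pi) ^ (-(n : ℝ) / 2) * Real.exp (-‖x‖ ^ 2 / 2))

/-- `m(x) = min {1, 1/‖x‖}`. -/
def mfun {n : ℕ} (x : EuclideanSpace ℝ (Fin n)) : ℝ :=
  if ‖x‖ ≤ 1 then 1 else ‖x‖⁻¹

/-- Ornstein–Uhlenbeck (Mehler) semigroup `e^{-tL} u (x)`. -/
def mehler (n : ℕ) (u : EuclideanSpace ℝ (Fin n) → ℝ) (t : ℝ)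
    (x : EuclideanSpace ℝ (Fin n)) : ℝ :=
  ∫ y, u (Real.exp (-t) • x + Real.sqrt (1 - Real.exp (-2 * t)) • y) ∂gaussMeasure n

/-- The gaussian conical square function `S_a u (x)`. -/
def Sfun (n : ℕ) (a : ℝ) (u : EuclideanSpace ℝ (Fin n) → ℝ)
    (x : EuclideanSpace ℝ (Fin n)) : ℝ≥0∞ :=
  (∫⁻ t in Set.Ioo (0 : ℝ) (a * mfun x),
      (∫⁻ y in ball x t,
        (gaussMeasure n (ball y t))⁻¹ *
          ENNReal.ofReal ((t * ‖fderiv ℝ (mehler n u (t ^ 2)) y‖) ^ 2) ∂gaussMeasure n) /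
        ENNReal.ofReal t) ^ (1 / 2 : ℝ)

/-- The gaussian non-tangential maximal function `T*_{(A,a)} u (x)`. -/
def Tstar (n : ℕ) (A a : ℝ) (u : EuclideanSpace ℝ (Fin n) → ℝ)
    (x : EuclideanSpace ℝ (Fin n)) : ℝ≥0∞ :=
  ⨆ (y : EuclideanSpace ℝ (Fin n)) (t : ℝ) (_ : dist y x < A * t) (_ : 0 < t)
      (_ : t < a * mfun x),
    ((gaussMeasure n (ball y (A * t)))⁻¹ *
        ∫⁻ z in ball y (A * t), ENNReal.ofReal ((mehler n u (t ^ 2) z) ^ 2) ∂gaussMeasure n) ^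
      (1 / 2 : ℝ)

/-- The admissible (gaussian) Hardy–Littlewood maximal function `M*_a f (x)`. -/
def Mstar (n : ℕ) (a : ℝ) (f : EuclideanSpace ℝ (Fin n) → ℝ)
    (x : EuclideanSpace ℝ (Fin n)) : ℝ≥0∞ :=
  ⨆ (r : ℝ) (_ : 0 < r) (_ : r ≤ a * mfun x),
    (gaussMeasure n (ball x r))⁻¹ *
      ∫⁻ y in ball x r, ENNReal.ofReal |f y| ∂gaussMeasure n

/-- The admissible cone `Γ^{(A,a)}_x(γ)`. -/
def cone (n : ℕ) (A a : ℝ) (x : EuclideanSpace ℝ (Fin n)) :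
    Set (EuclideanSpace ℝ (Fin n) × ℝ) :=
  {p | dist p.1 x < A * p.2 ∧ 0 < p.2 ∧ p.2 < a * mfun x}

/-- The modified admissible cone `Γ̃^{(A,a)}_x(γ)`. -/
def coneT (n : ℕ) (A a : ℝ) (x : EuclideanSpace ℝ (Fin n)) :
    Set (EuclideanSpace ℝ (Fin n) × ℝ) :=
  {p | dist p.1 x < A * p.2 ∧ 0 < p.2 ∧ p.2 < a * mfun p.1}

/-- The dyadic cube `2^{-k}(v + [0,1)ⁿ)` of scale `k`. -/
def dyadicCube (n k : ℕ) (v : Fin n → ℤ) : Set (EuclideanSpace ℝ (Fin n)) :=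
  {x | ∀ i, x i ∈ Set.Ico ((2 : ℝ) ^ (-(k : ℤ)) * v i) ((2 : ℝ) ^ (-(k : ℤ)) * (v i + 1))}

/-- The centre of the dyadic cube `2^{-k}(v + [0,1)ⁿ)`. -/
def cubeCenter (n k : ℕ) (v : Fin n → ℤ) : EuclideanSpace ℝ (Fin n) :=
  WithLp.toLp 2 (fun i => (2 : ℝ) ^ (-(k : ℤ)) * (v i + 1 / 2))

/-- The layers `L_0 = [-1,1)ⁿ`, `L_l = [-2^l,2^l)ⁿ \ [-2^{l-1},2^{l-1})ⁿ`. -/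
def layer (n : ℕ) : ℕ → Set (EuclideanSpace ℝ (Fin n))
  | 0 => {x | ∀ i, x i ∈ Set.Ico (-1 : ℝ) 1}
  | (l + 1) =>
      {x | ∀ i, x i ∈ Set.Ico (-(2 : ℝ) ^ (l + 1)) ((2 : ℝ) ^ (l + 1))} \
        {x | ∀ i, x i ∈ Set.Ico (-(2 : ℝ) ^ l) ((2 : ℝ) ^ l)}

/-- The cube `α ∘ Q` with the same centre as `Q = 2^{-k}(v + [0,1)ⁿ)` and `α` times
its side-length. -/
def scaledCube (n k : ℕ) (v : Fin n → ℤ) (α : ℝ) : Set (EuclideanSpace ℝ (Fin n)) :=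
  {x | ∀ i, x i ∈ Set.Ico (cubeCenter n k v i - α * (2 : ℝ) ^ (-(k : ℤ)) / 2)
      (cubeCenter n k v i + α * (2 : ℝ) ^ (-(k : ℤ)) / 2)}

/-- The Ornstein–Uhlenbeck operator `Lf(x) = -Δf(x) + x·∇f(x)`. -/
def OU (n : ℕ) (f : EuclideanSpace ℝ (Fin n) → ℂ) (x : EuclideanSpace ℝ (Fin n)) : ℂ :=
  -(∑ i : Fin n, iteratedFDeriv ℝ 2 f x ![EuclideanSpace.single i 1, EuclideanSpace.single i 1]) +
    fderiv ℝ f x x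


/-! On an admissible ball `B(c, r)` one has `r ≤ a` and `‖c‖ r ≤ a`, so `‖x‖²` varies by at
most `κ = A (2 + A)`, `A = (1 + 2τ) a`, over the enlarged ball `B(c, (1 + 2τ) r)`, which
contains every ball `B₂` as in the statement. Hence the gaussian density is comparable, up to
`e^{κ/2}`, to its value at `c` on both `B₁` and `B₂`, and the doubling bound reduces to
`|B₂| ≤ τⁿ |B₁|` for Lebesgue measure. -/

theorem le_and_norm_mul_le_of_le_mul_mfun {n : ℕ} {c : EuclideanSpace ℝ (Fin n)} {a r : ℝ}
    (hr : 0 ≤ r) (h : r ≤ a * mfun c) : r ≤ a ∧ ‖c‖ * r ≤ a := by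
  unfold mfun at h
  split_ifs at h with hc
  · constructor <;> nlinarith [norm_nonneg c]
  · have hc₀ : 0 < ‖c‖ := by linarith
    have hca : ‖c‖ * r ≤ a := by
      calc ‖c‖ * r ≤ ‖c‖ * (a * ‖c‖⁻¹) := by gcongr
        _ = a := by field_simp
    constructor <;> nlinarith

theorem enlarged_admissible_radius_bound {n : ℕ} {c : EuclideanSpace ℝ (Fin n)} {a r l : ℝ}
    (hr : 0 ≤ r) (h : r ≤ a * mfun c) (hl : 0 ≤ l) :
    l * r * (2 * ‖c‖ + l * r) ≤ l * a * (2 + l * a) := by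
  obtain ⟨hra, hca⟩ := le_and_norm_mul_le_of_le_mul_mfun hr h
  have hR : l * r ≤ l * a := mul_le_mul_of_nonneg_left hra hl
  have hcR : ‖c‖ * (l * r) ≤ l * a := by
    rw [mul_left_comm]; exact mul_le_mul_of_nonneg_left hca hl
  have hR₀ : 0 ≤ l * r := mul_nonneg hl hr
  nlinarith [mul_le_mul hR hR hR₀ (hR₀.trans hR)]

theorem ball_subset_ball_of_inter_nonempty {E : Type*} [PseudoMetricSpace E] {c₁ c₂ : E}
    {r₁ r₂ : ℝ} (h : (ball c₁ r₁ ∩ ball c₂ r₂).Nonempty) : ball c₂ r₂ ⊆ ball c₁ (r₁ + 2 * r₂) := by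
  obtain ⟨z, hz₁, hz₂⟩ := h
  refine ball_subset_ball' ?_
  linarith [dist_triangle c₂ z c₁, dist_comm c₂ z, mem_ball.mp hz₁, mem_ball.mp hz₂]

theorem abs_sq_norm_sub_sq_norm_le {E : Type*} [SeminormedAddCommGroup E] {x c : E} {R : ℝ}
    (h : dist x c ≤ R) : |‖x‖ ^ 2 - ‖c‖ ^ 2| ≤ R * (2 * ‖c‖ + R) := by
  have hdiff : |‖x‖ - ‖c‖| ≤ R := (abs_norm_sub_norm_le x c).trans (dist_eq_norm x c ▸ h)
  have hsum : ‖x‖ + ‖c‖ ≤ 2 * ‖c‖ + R := by linarith [(abs_le.mp hdiff).2]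
  calc |‖x‖ ^ 2 - ‖c‖ ^ 2| = |‖x‖ - ‖c‖| * (‖x‖ + ‖c‖) := by
        rw [sq_sub_sq, abs_mul, abs_of_nonneg (by positivity : 0 ≤ ‖x‖ + ‖c‖), mul_comm]
    _ ≤ R * (2 * ‖c‖ + R) := by gcongr; exact (abs_nonneg _).trans hdiff

theorem withDensity_apply_le_mul {α : Type*} [MeasurableSpace α] {μ : Measure α} [SFinite μ]
    {f : α → ℝ≥0∞} {s : Set α} {M : ℝ≥0∞} (h : ∀ x ∈ s, f x ≤ M) :
    μ.withDensity f s ≤ M * μ s := by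
  rw [withDensity_apply' _ s, ← setLIntegral_const]
  exact setLIntegral_mono measurable_const h

theorem mul_le_withDensity_apply {α : Type*} [MeasurableSpace α] {μ : Measure α} [SFinite μ]
    {f : α → ℝ≥0∞} (hf : Measurable f) {s : Set α} {M : ℝ≥0∞} (h : ∀ x ∈ s, M ≤ f x) :
    M * μ s ≤ μ.withDensity f s := by
  rw [withDensity_apply' _ s, ← setLIntegral_const]
  exact setLIntegral_mono hf h

theorem Measure.addHaar_ball_le_of_le_mul {E : Type*} [NormedAddCommGroup E] [NormedSpace ℝ E]
    [MeasurableSpace E] [BorelSpace E] [FiniteDimensional ℝ E] (μ : Measure E)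
    [μ.IsAddHaarMeasure] (x y : E) {r s τ : ℝ} (hτ : 0 < τ) (h : s ≤ τ * r) :
    μ (ball y s) ≤ ENNReal.ofReal (τ ^ Module.finrank ℝ E) * μ (ball x r) :=
  calc μ (ball y s) ≤ μ (ball y (τ * r)) := measure_mono (ball_subset_ball h)
    _ = ENNReal.ofReal (τ ^ Module.finrank ℝ E) * μ (ball x r) := by
      rw [Measure.addHaar_ball_mul_of_pos μ y hτ, Measure.addHaar_ball_center μ x]

-- `gaussMeasure n` is definitionally `volume.withDensity (ENNReal.ofReal ∘ gaussDensity n)`.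
def gaussDensity (n : ℕ) (x : EuclideanSpace ℝ (Fin n)) : ℝ :=
  (2 * Real.pi) ^ (-(n : ℝ) / 2) * Real.exp (-‖x‖ ^ 2 / 2)

section GaussDensity

variable {n : ℕ} {x c : EuclideanSpace ℝ (Fin n)} {R : ℝ}

theorem measurable_gaussDensity : Measurable (gaussDensity n) := by
  unfold gaussDensity; fun_prop

theorem gaussDensity_le_mul_exp (h : dist x c ≤ R) :
    gaussDensity n x ≤ gaussDensity n c * Real.exp (R * (2 * ‖c‖ + R) / 2) := by
  have hsq := (abs_le.mp (abs_sq_norm_sub_sq_norm_le h)).1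
  rw [gaussDensity, gaussDensity, mul_assoc, ← Real.exp_add]
  gcongr
  linarith

theorem mul_exp_le_gaussDensity (h : dist x c ≤ R) :
    gaussDensity n c * Real.exp (-(R * (2 * ‖c‖ + R)) / 2) ≤ gaussDensity n x := by
  have hsq := (abs_le.mp (abs_sq_norm_sub_sq_norm_le h)).2
  rw [gaussDensity, gaussDensity, mul_assoc, ← Real.exp_add]
  gcongr
  linarith

variable {s : Set (EuclideanSpace ℝ (Fin n))}

theorem gaussMeasure_le_of_subset_closedBall (hs : s ⊆ closedBall c R) :
    gaussMeasure n s ≤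
      ENNReal.ofReal (gaussDensity n c * Real.exp (R * (2 * ‖c‖ + R) / 2)) * volume s :=
  withDensity_apply_le_mul fun _ hx =>
    ENNReal.ofReal_le_ofReal (gaussDensity_le_mul_exp (mem_closedBall.mp (hs hx)))

theorem le_gaussMeasure_of_subset_closedBall (hs : s ⊆ closedBall c R) :
    ENNReal.ofReal (gaussDensity n c * Real.exp (-(R * (2 * ‖c‖ + R)) / 2)) * volume s ≤
      gaussMeasure n s :=
  mul_le_withDensity_apply measurable_gaussDensity.ennreal_ofReal fun _ hx =>
    ENNReal.ofReal_le_ofReal (mul_exp_le_gaussDensity (mem_closedBall.mp (hs hx)))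

theorem gaussMeasure_le_mul_of_volume_le {t : Set (EuclideanSpace ℝ (Fin n))} {C : ℝ}
    (hs : s ⊆ closedBall c R) (ht : t ⊆ closedBall c R) (hC : 0 ≤ C)
    (hvol : volume s ≤ ENNReal.ofReal C * volume t) :
    gaussMeasure n s ≤ ENNReal.ofReal (C * Real.exp (R * (2 * ‖c‖ + R))) * gaussMeasure n t := by
  set K := R * (2 * ‖c‖ + R)
  set g := gaussDensity n c
  have hconst : g * Real.exp (K / 2) * C = C * Real.exp K * (g * Real.exp (-K / 2)) := by
    have hsplit : Real.exp K = Real.exp (K / 2) * Real.exp (K / 2) := by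
      rw [← Real.exp_add, add_halves]
    have hcancel : Real.exp (-K / 2) * Real.exp (K / 2) = 1 := by
      rw [← Real.exp_add, neg_div, neg_add_cancel, Real.exp_zero]
    rw [hsplit]
    linear_combination (-(g * C * Real.exp (K / 2))) * hcancel
  calc gaussMeasure n s
      ≤ ENNReal.ofReal (g * Real.exp (K / 2)) * volume s :=
        gaussMeasure_le_of_subset_closedBall hs
    _ ≤ ENNReal.ofReal (g * Real.exp (K / 2)) * (ENNReal.ofReal C * volume t) := by gcongr
    _ = ENNReal.ofReal (C * Real.exp K) * (ENNReal.ofReal (g * Real.exp (-K / 2)) * volume t) := by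
        rw [← mul_assoc, ← mul_assoc, ← ENNReal.ofReal_mul' hC,
          ← ENNReal.ofReal_mul (by positivity), hconst]
    _ ≤ ENNReal.ofReal (C * Real.exp K) * gaussMeasure n t := by
        gcongr
        exact le_gaussMeasure_of_subset_closedBall ht

end GaussDensity

theorem gaussian_doubling_admissible_general (n : ℕ) (a τ : ℝ) (hτ : 0 < τ) :
    ∃ d > (0 : ℝ), ∀ (c₁ c₂ : EuclideanSpace ℝ (Fin n)) (r₁ r₂ : ℝ),
      0 ≤ r₁ → r₁ ≤ a * mfun c₁ →
      (ball c₁ r₁ ∩ ball c₂ r₂).Nonempty → r₂ ≤ τ * r₁ →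
      gaussMeasure n (ball c₂ r₂) ≤ ENNReal.ofReal d * gaussMeasure n (ball c₁ r₁) := by
  refine ⟨τ ^ n * Real.exp ((1 + 2 * τ) * a * (2 + (1 + 2 * τ) * a)), by positivity, ?_⟩
  intro c₁ c₂ r₁ r₂ hr₁ hadm hne hr₂
  set R := (1 + 2 * τ) * r₁
  have hB₁ : ball c₁ r₁ ⊆ closedBall c₁ R :=
    ball_subset_closedBall.trans (closedBall_subset_closedBall (by nlinarith))
  have hB₂ : ball c₂ r₂ ⊆ closedBall c₁ R :=
    (ball_subset_ball_of_inter_nonempty hne).trans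
      (ball_subset_closedBall.trans (closedBall_subset_closedBall (by linarith)))
  have hvol : volume (ball c₂ r₂) ≤ ENNReal.ofReal (τ ^ n) * volume (ball c₁ r₁) := by
    simpa only [finrank_euclideanSpace_fin] using
      Measure.addHaar_ball_le_of_le_mul volume c₁ c₂ hτ hr₂
  calc gaussMeasure n (ball c₂ r₂)
      ≤ ENNReal.ofReal (τ ^ n * Real.exp (R * (2 * ‖c₁‖ + R))) * gaussMeasure n (ball c₁ r₁) :=
        gaussMeasure_le_mul_of_volume_le hB₂ hB₁ (by positivity) hvol
    _ ≤ _ := by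
        gcongr ENNReal.ofReal (_ * Real.exp ?_) * _
        exact enlarged_admissible_radius_bound hr₁ hadm (by positivity)

/-- doubling property of the gaussian measure on admissible balls. -/
theorem gaussian_doubling_admissible (n : ℕ) (a τ : ℝ) (ha : 0 < a) (hτ : 0 < τ) :
    ∃ d > (0 : ℝ), ∀ (c₁ c₂ : EuclideanSpace ℝ (Fin n)) (r₁ r₂ : ℝ),
      0 ≤ r₁ → r₁ ≤ a * mfun c₁ →
      (ball c₁ r₁ ∩ ball c₂ r₂).Nonempty → r₂ ≤ τ * r₁ →
      gaussMeasure n (ball c₂ r₂) ≤ ENNReal.ofReal d * gaussMeasure n (ball c₁ r₁) :=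
  gaussian_doubling_admissible_general n a τ hτ

end
end

section
/- (Doubling property for admissible dyadic cubes.) Let α > 0. There exists a constant C_{α,n}, depending only on α and the dimension n, such that for every cube Q ∈ Δ^γ one has γ(α∘Q) ≤ C_{α,n} γ(Q), where α∘Q denotes the cube with the same centre as Q and α times its side-length. -/
open MeasureTheory Metric Set
open scoped ENNReal NNReal BigOperators

noncomputable section

/-! On a cube `Q` of side `δ = 2^{-(l+k)}` inside the layer `L_l`, and on its dilate `α ∘ Q`, the
squared norm varies by at most `n (1 + α) 2^l δ ≤ n (1 + α)`, so the gaussian density on `α ∘ Q`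
is at most `e^{n(1+α)/2}` times its value anywhere on `Q`. Comparing with Lebesgue measure,
`|α ∘ Q| = αⁿ |Q|`, gives `γ(α ∘ Q) ≤ αⁿ e^{n(1+α)/2} γ(Q)`. -/

theorem EuclideanSpace.volume_setOf_forall_mem_Ico {ι : Type*} [Fintype ι] (a b : ι → ℝ) :
    volume {x : EuclideanSpace ℝ ι | ∀ i, x i ∈ Ico (a i) (b i)} =
      ∏ i, ENNReal.ofReal (b i - a i) := by
  have : {x : EuclideanSpace ℝ ι | ∀ i, x i ∈ Ico (a i) (b i)} =
      WithLp.ofLp ⁻¹' univ.pi fun i => Ico (a i) (b i) := by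
    ext x; simp
  rw [this, (PiLp.volume_preserving_ofLp ι).measure_preimage
    (MeasurableSet.univ_pi fun _ => measurableSet_Ico).nullMeasurableSet, volume_pi_pi]
  simp only [Real.volume_Ico]

theorem EuclideanSpace.sq_norm_sub_sq_norm_le {ι : Type*} [Fintype ι]
    (x y : EuclideanSpace ℝ ι) {R d : ℝ} (hy : ∀ i, |y i| ≤ R) (hxy : ∀ i, |y i - x i| ≤ d) :
    ‖y‖ ^ 2 - ‖x‖ ^ 2 ≤ Fintype.card ι * (2 * R * d) := by
  rw [EuclideanSpace.real_norm_sq_eq, EuclideanSpace.real_norm_sq_eq, ← Finset.sum_sub_distrib,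
    ← Finset.card_univ, ← nsmul_eq_mul]
  refine Finset.sum_le_card_nsmul _ _ _ fun i _ => ?_
  -- y² - x² = 2y(y - x) - (y - x)²
  calc y i ^ 2 - x i ^ 2 ≤ 2 * |y i| * |y i - x i| := by
        rw [mul_assoc, ← abs_mul]
        nlinarith [le_abs_self (y i * (y i - x i)), sq_nonneg (y i - x i)]
    _ ≤ 2 * R * d := by
        gcongr
        exacts [by linarith [(abs_nonneg _).trans (hy i)], hy i, hxy i]

theorem MeasureTheory.Measure.withDensity_mul_le {α : Type*} [MeasurableSpace α] (μ : Measure α)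
    [SFinite μ] {f : α → ℝ≥0∞} (hf : Measurable f) {S Q : Set α} {K : ℝ≥0∞}
    (h : ∀ x ∈ S, ∀ y ∈ Q, f x ≤ K * f y) :
    μ.withDensity f S * μ Q ≤ K * μ S * μ.withDensity f Q := by
  rw [withDensity_apply', withDensity_apply', ← setLIntegral_const, ← lintegral_const_mul _ hf]
  refine setLIntegral_mono (by fun_prop) fun y hy => ?_
  calc ∫⁻ x in S, f x ∂μ ≤ ∫⁻ _ in S, K * f y ∂μ :=
        setLIntegral_mono measurable_const fun x hx => h x hx y hy
    _ = K * μ S * f y := by rw [setLIntegral_const]; ring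

theorem gaussMeasure_mul_volume_le {n : ℕ} {S Q : Set (EuclideanSpace ℝ (Fin n))} {B : ℝ}
    (h : ∀ x ∈ S, ∀ y ∈ Q, ‖y‖ ^ 2 ≤ ‖x‖ ^ 2 + 2 * B) :
    gaussMeasure n S * volume Q ≤ ENNReal.ofReal (Real.exp B) * volume S * gaussMeasure n Q :=
  Measure.withDensity_mul_le volume (by fun_prop) fun x hx y hy => by
    rw [← ENNReal.ofReal_mul (Real.exp_pos B).le]
    refine ENNReal.ofReal_le_ofReal ?_
    rw [mul_left_comm, ← Real.exp_add]
    gcongr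
    linarith [h x hx y hy]

section Cubes

variable {n k : ℕ} {v : Fin n → ℤ}

theorem dyadicCube_eq_scaledCube_one : dyadicCube n k v = scaledCube n k v 1 := by
  ext x
  simp only [dyadicCube, scaledCube, cubeCenter, mem_ofPred_eq]
  ring_nf

theorem volume_scaledCube {α : ℝ} (hα : 0 ≤ α) :
    volume (scaledCube n k v α) = ENNReal.ofReal ((α * 2 ^ (-(k : ℤ))) ^ n) := by
  rw [scaledCube, EuclideanSpace.volume_setOf_forall_mem_Ico, ENNReal.ofReal_pow (by positivity)]
  simp only [add_sub_sub_cancel, add_halves, Finset.prod_const, Finset.card_univ,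
    Fintype.card_fin]

theorem abs_sub_le_of_mem_scaledCube {α β : ℝ} {x y : EuclideanSpace ℝ (Fin n)}
    (hx : x ∈ scaledCube n k v α) (hy : y ∈ scaledCube n k v β) (i : Fin n) :
    |y i - x i| ≤ (α + β) * 2 ^ (-(k : ℤ)) / 2 := by
  obtain ⟨hx₁, hx₂⟩ := hx i
  obtain ⟨hy₁, hy₂⟩ := hy i
  rw [abs_le]
  constructor <;> linarith

theorem abs_le_of_mem_layer {l : ℕ} {x : EuclideanSpace ℝ (Fin n)} (hx : x ∈ layer n l)
    (i : Fin n) : |x i| ≤ 2 ^ l := by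
  cases l with
  | zero => simpa using abs_le.2 ⟨(hx i).1, (hx i).2.le⟩
  | succ l => exact abs_le.2 ⟨by linarith [(hx.1 i).1], (hx.1 i).2.le⟩

theorem gaussMeasure_scaledCube_le {α B : ℝ} (hα : 0 < α)
    (h : ∀ x ∈ scaledCube n k v α, ∀ y ∈ scaledCube n k v 1, ‖y‖ ^ 2 ≤ ‖x‖ ^ 2 + 2 * B) :
    gaussMeasure n (scaledCube n k v α) ≤
      ENNReal.ofReal (α ^ n * Real.exp B) * gaussMeasure n (scaledCube n k v 1) := by
  have key := gaussMeasure_mul_volume_le h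
  rw [volume_scaledCube hα.le, volume_scaledCube zero_le_one, one_mul, mul_pow,
    ENNReal.ofReal_mul (by positivity)] at key
  refine (ENNReal.mul_le_mul_iff_left (c := ENNReal.ofReal ((2 ^ (-(k : ℤ))) ^ n))
    (by positivity) ENNReal.ofReal_ne_top).1 (key.trans_eq ?_)
  rw [ENNReal.ofReal_mul (by positivity)]
  ring

theorem sq_norm_le_of_mem_scaledCube {l : ℕ} {α : ℝ} (hα : 0 ≤ α)
    (hQ : scaledCube n (l + k) v 1 ⊆ layer n l)
    {x y : EuclideanSpace ℝ (Fin n)} (hx : x ∈ scaledCube n (l + k) v α)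
    (hy : y ∈ scaledCube n (l + k) v 1) :
    ‖y‖ ^ 2 ≤ ‖x‖ ^ 2 + n * (α + 1) := by
  have hbound := EuclideanSpace.sq_norm_sub_sq_norm_le x y (abs_le_of_mem_layer (hQ hy))
    (abs_sub_le_of_mem_scaledCube hx hy)
  have hscale : (2 : ℝ) ^ l * 2 ^ (-((l + k : ℕ) : ℤ)) ≤ 1 := by
    rw [← zpow_natCast, ← zpow_add₀ two_ne_zero]
    exact zpow_le_one_of_nonpos₀ one_le_two (by push_cast; omega)
  rw [Fintype.card_fin] at hbound
  calc ‖y‖ ^ 2 ≤ ‖x‖ ^ 2 + n * ((α + 1) * (2 ^ l * 2 ^ (-((l + k : ℕ) : ℤ)))) := by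
        linarith
    _ ≤ ‖x‖ ^ 2 + n * ((α + 1) * 1) := by gcongr
    _ = ‖x‖ ^ 2 + n * (α + 1) := by rw [mul_one]

end Cubes

/-- doubling property for admissible dyadic cubes: `γ(α∘Q) ≤ C_{α,n} γ(Q)`
for every `Q ∈ Δ^γ`, i.e. every cube of `Δ_{l+k}` contained in the layer `L_l`. -/
theorem gaussian_doubling_cubes (n : ℕ) (α : ℝ) (hα : 0 < α) :
    ∃ C > (0 : ℝ), ∀ (k l : ℕ) (v : Fin n → ℤ),
      dyadicCube n (l + k) v ⊆ layer n l →
      gaussMeasure n (scaledCube n (l + k) v α) ≤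
        ENNReal.ofReal C * gaussMeasure n (dyadicCube n (l + k) v) := by
  refine ⟨α ^ n * Real.exp (n * (α + 1) / 2), by positivity, fun k l v hQ => ?_⟩
  rw [dyadicCube_eq_scaledCube_one] at hQ ⊢
  exact gaussMeasure_scaledCube_le hα fun x hx y hy => by
    linarith [sq_norm_le_of_mem_scaledCube hα.le hQ hx hy]

end
end

section
/- Let F ⊆ ℝⁿ be non-empty and a > 0. Set O := {x ∈ ℝⁿ : 0 < d(x,F) ≤ a·m(x)} and O' := {x ∈ ℝⁿ : 0 < d(x,F) < 2a·m(x)}. Then for all x ∈ O, d(x,F) ≤ 3·max{1,a}·d(x, ℝⁿ∖O'). -/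
open MeasureTheory Metric Set
open scoped ENNReal NNReal BigOperators

noncomputable section

/-!
On the ball of radius `r = d(x,F) / (3 max{1,a})` around `x`, the function `d(·,F)` moves by less
than `r ≤ d(x,F)/3` and, `m` being `1`-Lipschitz, `2a·m` drops by less than `2ar ≤ 2d(x,F)/3`.
So `0 < d(·,F) < 4d(x,F)/3 < 2a·m` on that ball, i.e. the ball lies in `O'`, whose complement
contains the non-empty set `F`.
-/

lemma mfun_eq_inv_max {n : ℕ} (x : EuclideanSpace ℝ (Fin n)) : mfun x = (max 1 ‖x‖)⁻¹ := by
  unfold mfun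
  split_ifs with h
  · rw [max_eq_left h, inv_one]
  · rw [max_eq_right (not_le.1 h).le]

lemma mfun_pos {n : ℕ} (x : EuclideanSpace ℝ (Fin n)) : 0 < mfun x := by
  rw [mfun_eq_inv_max]
  exact inv_pos.2 (lt_max_of_lt_left one_pos)

lemma Real.dist_inv_inv_le_of_one_le {s t : ℝ} (hs : 1 ≤ s) (ht : 1 ≤ t) :
    dist s⁻¹ t⁻¹ ≤ dist s t := by
  have hst : 1 ≤ |s * t| := by
    rw [abs_of_nonneg (by positivity)]
    exact one_le_mul_of_one_le_of_one_le hs ht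
  rw [Real.dist_eq, Real.dist_eq, inv_sub_inv (by positivity) (by positivity), abs_div,
    abs_sub_comm]
  exact div_le_self (abs_nonneg _) hst

lemma lipschitzWith_one_mfun {n : ℕ} :
    LipschitzWith 1 (mfun : EuclideanSpace ℝ (Fin n) → ℝ) := by
  refine LipschitzWith.of_dist_le_mul fun x y => ?_
  rw [mfun_eq_inv_max, mfun_eq_inv_max, NNReal.coe_one, one_mul]
  calc dist (max 1 ‖x‖)⁻¹ (max 1 ‖y‖)⁻¹ ≤ dist (max 1 ‖x‖) (max 1 ‖y‖) :=
        Real.dist_inv_inv_le_of_one_le (le_max_left _ _) (le_max_left _ _)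
    _ ≤ dist ‖x‖ ‖y‖ := by
        simpa [Real.dist_eq] using abs_max_sub_max_le_max 1 ‖x‖ 1 ‖y‖
    _ ≤ dist x y := dist_norm_norm_le x y

namespace Metric

variable {X : Type*} [PseudoMetricSpace X]

lemma le_infDist_compl_of_ball_subset {s : Set X} {x : X} {r : ℝ} (hs : sᶜ.Nonempty)
    (h : ball x r ⊆ s) : r ≤ infDist x sᶜ :=
  (le_infDist hs).2 fun _ hy => not_lt.1 fun hlt => hy (h (mem_ball'.2 hlt))

lemma ball_subset_setOf_infDist_lt_two_mul {F : Set X} {w : X → ℝ} {a : ℝ} {x : X}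
    (hw : LipschitzWith 1 w) (ha : 0 ≤ a) (hxF : 0 < infDist x F)
    (hxa : infDist x F ≤ a * w x) :
    ball x (infDist x F / (3 * max 1 a)) ⊆
      {y | 0 < infDist y F ∧ infDist y F < 2 * a * w y} := by
  set d := infDist x F
  set r := d / (3 * max 1 a)
  have hr : 3 * max 1 a * r = d := mul_div_cancel₀ d (by positivity)
  have hr₀ : 0 ≤ r := by positivity
  have hr₁ : 3 * r ≤ d := by linarith [mul_le_mul_of_nonneg_right (le_max_left 1 a) hr₀]
  have hr_a : 3 * (a * r) ≤ d := by linarith [mul_le_mul_of_nonneg_right (le_max_right 1 a) hr₀]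
  intro y hy
  have hxy : dist y x < r := hy
  have hyF_ge : d ≤ infDist y F + dist y x := by
    simpa only [dist_comm] using infDist_le_infDist_add_dist (x := x) (y := y) (s := F)
  have hyF_le : infDist y F ≤ d + dist y x := infDist_le_infDist_add_dist
  have hwy : a * (w x - dist y x) ≤ a * w y := by
    refine mul_le_mul_of_nonneg_left ?_ ha
    simpa only [dist_comm, NNReal.coe_one, one_mul, sub_le_iff_le_add] using hw.le_add_mul x y
  have hadist : a * dist y x ≤ a * r := mul_le_mul_of_nonneg_left hxy.le ha
  exact ⟨by linarith, by linarith⟩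

end Metric

theorem dist_le_dist_complement_general (n : ℕ) (a : ℝ)
    (F : Set (EuclideanSpace ℝ (Fin n)))
    (x : EuclideanSpace ℝ (Fin n))
    (hx : 0 < infDist x F ∧ infDist x F ≤ a * mfun x) :
    infDist x F ≤ 3 * max 1 a *
      infDist x {y : EuclideanSpace ℝ (Fin n) |
        0 < infDist y F ∧ infDist y F < 2 * a * mfun y}ᶜ := by
  obtain ⟨hxF, hxa⟩ := hx
  have ha : 0 ≤ a := ((pos_iff_pos_of_mul_pos (hxF.trans_le hxa)).2 (mfun_pos x)).le
  obtain ⟨z, hz⟩ : F.Nonempty := nonempty_iff_ne_empty.2 fun hF => by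
    simp [hF] at hxF
  have hz' : z ∈ {y | 0 < infDist y F ∧ infDist y F < 2 * a * mfun y}ᶜ :=
    fun hzO => hzO.1.ne' (infDist_zero_of_mem hz)
  have hball := ball_subset_setOf_infDist_lt_two_mul lipschitzWith_one_mfun ha hxF hxa
  rw [← div_le_iff₀' (by positivity)]
  exact le_infDist_compl_of_ball_subset ⟨z, hz'⟩ hball

/-- for `x ∈ O`, `d(x,F) ≤ 3·max{1,a}·d(x, ∁O')`. -/
theorem dist_le_dist_complement (n : ℕ) (a : ℝ) (ha : 0 < a)
    (F : Set (EuclideanSpace ℝ (Fin n))) (hF : F.Nonempty)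
    (x : EuclideanSpace ℝ (Fin n))
    (hx : 0 < infDist x F ∧ infDist x F ≤ a * mfun x) :
    infDist x F ≤ 3 * max 1 a *
      infDist x {y : EuclideanSpace ℝ (Fin n) |
        0 < infDist y F ∧ infDist y F < 2 * a * mfun y}ᶜ :=
  dist_le_dist_complement_general n a F x hx

end
end

section
/- (Weak type (1,1) for the admissible maximal function.) Let a > 0. There exists a constant C, depending only on a and the dimension n, such that for all f ∈ L¹(γ) and all τ > 0, τ · γ({x ∈ ℝⁿ : M*_a f(x) > τ}) ≤ C ‖f‖_{L¹(γ)}. -/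
open MeasureTheory Metric Set
open scoped ENNReal NNReal BigOperators

noncomputable section

/-! Admissible balls have radius at most `|a|`, so Besicovitch's covering theorem applies to the
balls on which the `γ`-average of `|f|` exceeds `τ`: they cover the level set and split into `N`
disjoint subfamilies, with `N` depending only on `n`. Summing `τ γ(B) ≤ ∫_B |f| dγ` over each
subfamily gives `τ γ{M*_a f > τ} ≤ N ‖f‖₁`. Unlike the Vitali argument, this needs no doubling
property of `γ`, which fails at large scales. -/

section WeightedBallCovering

variable {α : Type*} [MeasurableSpace α]

theorem mul_measure_biUnion_le_of_pairwiseDisjoint {μ ν : Measure α} {t : ℝ≥0∞} {ι : Type*}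
    {u : Set ι} {B : ι → Set α}
    (hu : u.Countable) (hB : u.PairwiseDisjoint B) (hBm : ∀ j ∈ u, MeasurableSet (B j))
    (h : ∀ j ∈ u, t * μ (B j) ≤ ν (B j)) :
    t * μ (⋃ j ∈ u, B j) ≤ ν (⋃ j ∈ u, B j) :=
  calc t * μ (⋃ j ∈ u, B j)
      ≤ t * ∑' j : u, μ (B j) := mul_le_mul_right (measure_biUnion_le μ hu B) t
    _ = ∑' j : u, t * μ (B j) := ENNReal.tsum_mul_left.symm
    _ ≤ ∑' j : u, ν (B j) := ENNReal.tsum_le_tsum fun j => h j j.2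
    _ = ν (⋃ j ∈ u, B j) := (measure_biUnion hu hB hBm).symm

variable [MetricSpace α] [TopologicalSpace.SeparableSpace α] [OpensMeasurableSpace α]
  [HasBesicovitchCovering α]

theorem Besicovitch.exists_mul_measure_le_of_forall_ball :
    ∃ N : ℕ, ∀ (μ ν : Measure α) (t : ℝ≥0∞) (R : ℝ) (s : Set α),
      (∀ x ∈ s, ∃ r, 0 < r ∧ r ≤ R ∧ t * μ (ball x r) ≤ ν (ball x r)) →
        t * μ s ≤ N * ν univ := by
  obtain ⟨N, τ, hτ, hN⟩ := HasBesicovitchCovering.no_satelliteConfig (α := α)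
  refine ⟨N, fun μ ν t R s hs => ?_⟩
  choose! r hr0 hrR hr using hs
  let q : BallPackage s α := ⟨Subtype.val, fun x => r x, fun x => hr0 x x.2, R, fun x => hrR x x.2⟩
  obtain ⟨S, hS_disj, hS_cov⟩ := exist_disjoint_covering_families hτ hN q
  have hs_cov : s ⊆ ⋃ i, ⋃ j ∈ S i, ball (j : α) (r j) := by
    simpa [q] using hS_cov
  have hS_count (i : Fin N) : (S i).Countable :=
    (hS_disj i).countable_of_nonempty_interior fun j _ =>
      ⟨j, interior_mono ball_subset_closedBall <| by
        rw [isOpen_ball.interior_eq]; exact mem_ball_self (hr0 j j.2)⟩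
  calc t * μ s
      ≤ t * μ (⋃ i, ⋃ j ∈ S i, ball (j : α) (r j)) := mul_le_mul_right (measure_mono hs_cov) t
    _ ≤ ∑ i, t * μ (⋃ j ∈ S i, ball (j : α) (r j)) := by
      rw [← Finset.mul_sum]; exact mul_le_mul_right (measure_iUnion_fintype_le μ _) t
    _ ≤ ∑ _i : Fin N, ν univ := by
      refine Finset.sum_le_sum fun i _ => ?_
      refine (mul_measure_biUnion_le_of_pairwiseDisjoint (hS_count i)
        ((hS_disj i).mono fun j => ball_subset_closedBall) (fun j _ => measurableSet_ball)
        fun j _ => hr j j.2).trans (measure_mono (subset_univ _))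
    _ = N * ν univ := by simp

end WeightedBallCovering

lemma mfun_nonneg {n : ℕ} (x : EuclideanSpace ℝ (Fin n)) : 0 ≤ mfun x := by
  unfold mfun; split_ifs <;> positivity

lemma mfun_le_one {n : ℕ} (x : EuclideanSpace ℝ (Fin n)) : mfun x ≤ 1 := by
  unfold mfun
  split_ifs with h
  · exact le_rfl
  · exact inv_le_one_of_one_le₀ (le_of_not_ge h)

lemma exists_ball_of_lt_Mstar {n : ℕ} {a τ : ℝ} {f : EuclideanSpace ℝ (Fin n) → ℝ}
    {x : EuclideanSpace ℝ (Fin n)} (hx : ENNReal.ofReal τ < Mstar n a f x) :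
    ∃ r, 0 < r ∧ r ≤ |a| ∧ ENNReal.ofReal τ * gaussMeasure n (ball x r) ≤
      (gaussMeasure n).withDensity (fun y => ENNReal.ofReal |f y|) (ball x r) := by
  simp only [Mstar, lt_iSup_iff] at hx
  obtain ⟨r, hr0, hra, hlt⟩ := hx
  refine ⟨r, hr0, ?_, ?_⟩
  · calc r ≤ a * mfun x := hra
      _ ≤ |a| * mfun x := mul_le_mul_of_nonneg_right (le_abs_self a) (mfun_nonneg x)
      _ ≤ |a| := mul_le_of_le_one_right (abs_nonneg a) (mfun_le_one x)
  · rw [withDensity_apply _ measurableSet_ball]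
    exact ENNReal.mul_le_of_le_div (by rw [ENNReal.div_eq_inv_mul]; exact hlt.le)

theorem Mstar_weak_type_general (n : ℕ) (a : ℝ) :
    ∃ C > (0 : ℝ), ∀ f : EuclideanSpace ℝ (Fin n) → ℝ, Integrable f (gaussMeasure n) →
      ∀ τ > (0 : ℝ),
        ENNReal.ofReal τ * gaussMeasure n {x | ENNReal.ofReal τ < Mstar n a f x} ≤
          ENNReal.ofReal (C * ∫ x, |f x| ∂gaussMeasure n) := by
  obtain ⟨N, hN⟩ :=
    Besicovitch.exists_mul_measure_le_of_forall_ball (α := EuclideanSpace ℝ (Fin n))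
  refine ⟨N + 1, by positivity, fun f hf τ _ => ?_⟩
  have hweak := hN (gaussMeasure n) ((gaussMeasure n).withDensity fun y => ENNReal.ofReal |f y|)
    (ENNReal.ofReal τ) |a| _ fun x hx => exists_ball_of_lt_Mstar hx
  rw [withDensity_apply _ MeasurableSet.univ, Measure.restrict_univ,
    ← ofReal_integral_eq_lintegral_ofReal hf.abs (.of_forall fun y => abs_nonneg _)] at hweak
  refine hweak.trans ?_
  rw [ENNReal.ofReal_mul (by positivity), ← ENNReal.ofReal_natCast]
  gcongr
  linarith

/-- weak type `(1,1)` bound for the admissible maximal function `M*_a`. -/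
theorem Mstar_weak_type (n : ℕ) (a : ℝ) (ha : 0 < a) :
    ∃ C > (0 : ℝ), ∀ f : EuclideanSpace ℝ (Fin n) → ℝ, Integrable f (gaussMeasure n) →
      ∀ τ > (0 : ℝ),
        ENNReal.ofReal τ * gaussMeasure n {x | ENNReal.ofReal τ < Mstar n a f x} ≤
          ENNReal.ofReal (C * ∫ x, |f x| ∂gaussMeasure n) :=
  Mstar_weak_type_general n a
end
end
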